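/- Let p, q > 0 and let (X_n)_{n≥1} be independent and identically distributed real-valued random variables on a probability space, with X₁ integrable. Then for every ε > 0, P(|(A_N^{p,q})^{-1}·∑_{n=1}^{N} w_{p,q}(n/N)·X_n − (A_N^{p,q})^{-1}·∑_{n=1}^{N} w_{p,q}(n/N)·E[X_n]| < ε) → 1 as N → ∞ (weighted Khinchin law of large numbers). -/

import Mathlib

/-!
Let `m` be the common mean. By the strong law of large numbers, the partial sums
`S k = ∑_{i < k} (X (i + 1) - m)` satisfy `S k = o(k)` almost surely, hence
`max_{k ≤ N} |S k| = o(N)`. Summation by parts writes `∑ w(n/N) (X n - m)` as a sum of the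
increments of `n ↦ w(n/N)` against the `S k`, so it is at most the total variation of `w` on
`[0, 1]` times `max_{k ≤ N} |S k|`, which is `o(N)`. The variation is finite because `w`
increases up to `p / (p + q)` and decreases afterwards, and `A_N` grows linearly because `w` is
bounded below on `[1/4, 3/4]`. So the normalized weighted averages converge to the mean almost
surely, hence in probability.
-/

open MeasureTheory Filter ProbabilityTheory

/-- The weighting function `w_{p,q}`. -/
noncomputable def wpq (p q : ℝ) (x : ℝ) : ℝ :=
  if x ∈ Set.Ioo (0 : ℝ) 1 then
    (∫ s in (0:ℝ)..1, Real.exp (-(s ^ (-p) * (1 - s) ^ (-q))))⁻¹ *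
      Real.exp (-(x ^ (-p) * (1 - x) ^ (-q)))
  else 0

/-- The normalizer `A_N^{p,q} = ∑_{n=0}^{N-1} w_{p,q}(n/N)`. -/
noncomputable def Apq (p q : ℝ) (N : ℕ) : ℝ :=
  ∑ n ∈ Finset.range N, wpq p q ((n : ℝ) / N)

open Set Topology

theorem boundedVariationOn_Icc_of_monotoneOn_of_antitoneOn {α : Type*} [LinearOrder α]
    {f : α → ℝ} {a b c : α} (hab : a ≤ b) (hbc : b ≤ c)
    (hmono : MonotoneOn f (Icc a b)) (hanti : AntitoneOn f (Icc b c)) :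
    BoundedVariationOn f (Icc a c) := by
  have h₁ : BoundedVariationOn f (Icc a b) := by
    simpa using hmono.locallyBoundedVariationOn a b ⟨le_rfl, hab⟩ ⟨hab, le_rfl⟩
  have h₂ : BoundedVariationOn (fun x ↦ -f x) (Icc b c) := by
    simpa using hanti.neg.locallyBoundedVariationOn b c ⟨le_rfl, hbc⟩ ⟨hbc, le_rfl⟩
  have h₂' : BoundedVariationOn f (Icc b c) := by
    simpa [Function.comp_def] using LipschitzWith.id.neg.comp_boundedVariationOn h₂
  rw [BoundedVariationOn, ← Icc_union_Icc_eq_Icc hab hbc,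
    eVariationOn.union f (isGreatest_Icc hab) (isLeast_Icc hbc)]
  exact ENNReal.add_ne_top.2 ⟨h₁, h₂'⟩

theorem BoundedVariationOn.sum_abs_sub_le {α : Type*} [LinearOrder α] {f : α → ℝ} {s : Set α}
    (hf : BoundedVariationOn f s) {n : ℕ} {u : ℕ → α} (hu : MonotoneOn u (Icc 0 n))
    (us : ∀ i ∈ Icc 0 n, u i ∈ s) :
    ∑ i ∈ Finset.range n, |f (u (i + 1)) - f (u i)| ≤ (eVariationOn f s).toReal := by
  have h := eVariationOn.sum_le_of_monotoneOn_Icc (f := f) hu us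
  simp only [← Finset.range_eq_Ico, edist_dist, Real.dist_eq] at h
  rw [← ENNReal.ofReal_sum_of_nonneg fun _ _ ↦ abs_nonneg _] at h
  exact (ENNReal.ofReal_le_iff_le_toReal hf).1 h

theorem eventually_forall_abs_le_mul_of_tendsto_div {S : ℕ → ℝ}
    (hS : Tendsto (fun n : ℕ ↦ S n / n) atTop (𝓝 0)) {ε : ℝ} (hε : 0 < ε) :
    ∀ᶠ N : ℕ in atTop, ∀ k ≤ N, |S k| ≤ ε * N := by
  obtain ⟨K, hK⟩ := Metric.tendsto_atTop.1 hS ε hε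
  set C := ∑ k ∈ Finset.range (K + 1), |S k|
  filter_upwards [eventually_ge_atTop K, eventually_ge_atTop ⌈C / ε⌉₊] with N hKN hCN k hkN
  have hkN' : (k : ℝ) ≤ N := by exact_mod_cast hkN
  rcases le_or_gt k K with hkK | hKk
  · calc |S k| ≤ C := Finset.single_le_sum (f := fun k ↦ |S k|) (fun _ _ ↦ abs_nonneg _)
          (Finset.mem_range.2 (by omega))
      _ ≤ ε * N := (div_le_iff₀' hε).1 (Nat.ceil_le.1 hCN)
  · have hk : (0 : ℝ) < k := by exact_mod_cast (show 0 < k by omega)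
    have := hK k hKk.le
    rw [Real.dist_eq, sub_zero, abs_div, Nat.abs_cast, div_lt_iff₀ hk] at this
    nlinarith

theorem tendsto_sum_mul_div_of_tendsto_sum_div {f : ℝ → ℝ} (hf : BoundedVariationOn f (Icc 0 1))
    (hf1 : f 1 = 0) {y : ℕ → ℝ}
    (hy : Tendsto (fun n : ℕ ↦ (∑ i ∈ Finset.range n, y i) / n) atTop (𝓝 0)) :
    Tendsto (fun N : ℕ ↦ (∑ i ∈ Finset.range N, f ((i + 1 : ℕ) / N) * y i) / N) atTop (𝓝 0) := by
  set V := (eVariationOn f (Icc 0 1)).toReal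
  have hV : 0 ≤ V := ENNReal.toReal_nonneg
  refine Metric.tendsto_nhds.2 fun ε hε ↦ ?_
  have hε' : 0 < ε / (V + 1) := by positivity
  filter_upwards [eventually_forall_abs_le_mul_of_tendsto_div hy hε', eventually_gt_atTop 0]
    with N hS hN
  have hN' : (0 : ℝ) < N := by exact_mod_cast hN
  set F : ℕ → ℝ := fun i ↦ f ((i + 1 : ℕ) / N)
  have habel : ∑ i ∈ Finset.range N, F i * y i =
      -∑ i ∈ Finset.range (N - 1), (F (i + 1) - F i) * ∑ j ∈ Finset.range (i + 1), y j := by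
    have hlast : F (N - 1) = 0 := by
      simp only [F, Nat.sub_add_cancel hN, div_self hN'.ne', hf1]
    simpa [hlast] using Finset.sum_range_by_parts F y N
  have hvar : ∑ i ∈ Finset.range (N - 1), |F (i + 1) - F i| ≤ V := by
    refine hf.sum_abs_sub_le (u := fun i ↦ ((i + 1 : ℕ) : ℝ) / N) (fun i _ j _ hij ↦ ?_)
      fun i hi ↦ ⟨?_, ?_⟩
    · dsimp only; gcongr
    · positivity
    · rw [div_le_one hN']
      exact_mod_cast (show i + 1 ≤ N by have := hi.2; omega)
  rw [Real.dist_eq, sub_zero, abs_div, Nat.abs_cast, div_lt_iff₀ hN', habel, abs_neg]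
  calc |∑ i ∈ Finset.range (N - 1), (F (i + 1) - F i) * ∑ j ∈ Finset.range (i + 1), y j|
      ≤ ∑ i ∈ Finset.range (N - 1), |F (i + 1) - F i| * (ε / (V + 1) * N) := by
        refine (Finset.abs_sum_le_sum_abs _ _).trans (Finset.sum_le_sum fun i hi ↦ ?_)
        rw [abs_mul]
        exact mul_le_mul_of_nonneg_left (hS _ (by have := Finset.mem_range.1 hi; omega))
          (abs_nonneg _)
    _ = (∑ i ∈ Finset.range (N - 1), |F (i + 1) - F i|) * (ε / (V + 1)) * N := by
        rw [mul_assoc, Finset.sum_mul]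
    _ ≤ V * (ε / (V + 1)) * N := by gcongr
    _ < ε * N := by
        gcongr
        rw [mul_div_assoc', div_lt_iff₀ (by positivity)]
        nlinarith

theorem tendsto_inv_mul_sum_Icc_mul_sub {f : ℝ → ℝ} (hf : BoundedVariationOn f (Icc 0 1))
    (hf1 : f 1 = 0) {A : ℕ → ℝ} {α : ℝ} (hα : 0 < α) (hA : ∀ᶠ N : ℕ in atTop, α * N ≤ A N)
    {x : ℕ → ℝ} {m : ℝ}
    (hx : Tendsto (fun n : ℕ ↦ (∑ i ∈ Finset.range n, x (i + 1)) / n) atTop (𝓝 m)) :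
    Tendsto (fun N : ℕ ↦ (A N)⁻¹ * ∑ n ∈ Finset.Icc 1 N, f (n / N) * (x n - m)) atTop (𝓝 0) := by
  have hy : Tendsto (fun n : ℕ ↦ (∑ i ∈ Finset.range n, (x (i + 1) - m)) / n) atTop (𝓝 0) := by
    refine (sub_self m ▸ hx.sub_const m).congr' ?_
    filter_upwards [eventually_ne_atTop 0] with n hn
    rw [Finset.sum_sub_distrib, Finset.sum_const, Finset.card_range, nsmul_eq_mul, sub_div,
      mul_div_cancel_left₀ _ (Nat.cast_ne_zero.2 hn)]
  have hlim := ((tendsto_sum_mul_div_of_tendsto_sum_div hf hf1 hy).norm.const_mul α⁻¹)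
  rw [norm_zero, mul_zero] at hlim
  refine squeeze_zero_norm' ?_ hlim
  filter_upwards [hA, eventually_gt_atTop 0] with N hAN hN
  have hN' : (0 : ℝ) < N := by exact_mod_cast hN
  have hreindex : ∑ n ∈ Finset.Icc 1 N, f (n / N) * (x n - m) =
      ∑ i ∈ Finset.range N, f ((i + 1 : ℕ) / N) * (x (i + 1) - m) := by
    rw [Finset.range_eq_Ico, Finset.sum_Ico_add' (fun n : ℕ ↦ f (n / N) * (x n - m)), zero_add,
      Finset.Ico_add_one_right_eq_Icc]
  rw [hreindex, norm_mul, norm_inv, norm_div, Real.norm_natCast, div_eq_inv_mul, ← mul_assoc,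
    Real.norm_of_nonneg ((mul_nonneg hα.le hN'.le).trans hAN)]
  gcongr
  rw [← mul_inv]
  exact inv_anti₀ (by positivity) hAN

theorem mul_le_sum_range_div {f : ℝ → ℝ} {δ : ℝ} (hf : ∀ x, 0 ≤ f x) (hδ : 0 ≤ δ)
    (hfδ : ∀ x ∈ Icc (1 / 4 : ℝ) (3 / 4), δ ≤ f x) {N : ℕ} (hN : 2 ≤ N) :
    δ / 4 * N ≤ ∑ n ∈ Finset.range N, f (n / N) := by
  have hN' : (0 : ℝ) < N := by exact_mod_cast (show 0 < N by omega)
  set T := Finset.Icc ((N + 3) / 4) (3 * N / 4)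
  have hT : T ⊆ Finset.range N := fun n hn ↦ by
    rw [Finset.mem_Icc] at hn; rw [Finset.mem_range]; omega
  have hcard : (N : ℝ) ≤ 4 * T.card := by
    rw [Nat.card_Icc]; exact_mod_cast (show N ≤ 4 * (3 * N / 4 + 1 - (N + 3) / 4) by omega)
  have hmem : ∀ n ∈ T, (n / N : ℝ) ∈ Icc (1 / 4 : ℝ) (3 / 4) := fun n hn ↦ by
    rw [Finset.mem_Icc] at hn
    have h₁ : (N : ℝ) ≤ 4 * n := by exact_mod_cast (show N ≤ 4 * n by omega)
    have h₂ : 4 * (n : ℝ) ≤ 3 * N := by exact_mod_cast (show 4 * n ≤ 3 * N by omega)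
    constructor
    · rw [le_div_iff₀ hN']; linarith
    · rw [div_le_iff₀ hN']; linarith
  calc δ / 4 * N ≤ ∑ _n ∈ T, δ := by
        rw [Finset.sum_const, nsmul_eq_mul]; nlinarith
    _ ≤ ∑ n ∈ T, f (n / N) := Finset.sum_le_sum fun n hn ↦ hfδ _ (hmem n hn)
    _ ≤ ∑ n ∈ Finset.range N, f (n / N) :=
        Finset.sum_le_sum_of_subset_of_nonneg hT fun _ _ _ ↦ hf _

theorem tendsto_measure_abs_lt_of_ae_tendsto_zero {Ω : Type*} [MeasurableSpace Ω]
    {μ : Measure Ω} [IsProbabilityMeasure μ] {Z : ℕ → Ω → ℝ}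
    (hZ : ∀ N, AEStronglyMeasurable (Z N) μ)
    (hlim : ∀ᵐ ω ∂μ, Tendsto (fun N ↦ Z N ω) atTop (𝓝 0)) {ε : ℝ} (hε : 0 < ε) :
    Tendsto (fun N ↦ μ {ω | |Z N ω| < ε}) atTop (𝓝 1) := by
  have hbad := tendstoInMeasure_iff_norm.1 (tendstoInMeasure_of_tendsto_ae hZ hlim) ε hε
  have hgood : Tendsto (fun N ↦ 1 - μ {ω | ε ≤ ‖Z N ω - 0‖}) atTop (𝓝 1) := by
    simpa using ENNReal.Tendsto.sub tendsto_const_nhds hbad (Or.inl ENNReal.one_ne_top)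
  refine tendsto_of_tendsto_of_tendsto_of_le_of_le hgood tendsto_const_nhds (fun N ↦ ?_)
    fun N ↦ prob_le_one
  have hcompl : {ω | |Z N ω| < ε}ᶜ = {ω | ε ≤ ‖Z N ω - 0‖} := by
    ext ω; simp
  rw [tsub_le_iff_right, ← hcompl, ← measure_univ (μ := μ)]
  exact measure_univ_le_add_compl _

theorem integral_exp_neg_rpow_mul_rpow_pos (p q : ℝ) :
    0 < ∫ s in (0 : ℝ)..1, Real.exp (-(s ^ (-p) * (1 - s) ^ (-q))) := by
  refine intervalIntegral.intervalIntegral_pos_of_pos_on ?_ (fun _ _ ↦ Real.exp_pos _) one_pos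
  refine (intervalIntegrable_const (c := (1 : ℝ))).mono_fun' (by fun_prop) ?_
  rw [uIoc_of_le zero_le_one]
  refine ae_restrict_of_forall_mem measurableSet_Ioc fun s hs ↦ ?_
  dsimp only
  rw [Real.norm_eq_abs, Real.abs_exp, Real.exp_le_one_iff, neg_nonpos]
  exact mul_nonneg (Real.rpow_nonneg hs.1.le _) (Real.rpow_nonneg (by linarith [hs.2]) _)

theorem wpq_nonneg (p q x : ℝ) : 0 ≤ wpq p q x := by
  have := integral_exp_neg_rpow_mul_rpow_pos p q
  unfold wpq
  split_ifs <;> positivity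

noncomputable def logBetaKernel (p q x : ℝ) : ℝ := p * Real.log x + q * Real.log (1 - x)

theorem wpq_eq_of_mem_Ioo {p q x : ℝ} (hx : x ∈ Ioo 0 1) :
    wpq p q x = (∫ s in (0 : ℝ)..1, Real.exp (-(s ^ (-p) * (1 - s) ^ (-q))))⁻¹ *
      Real.exp (-Real.exp (-logBetaKernel p q x)) := by
  rw [wpq, if_pos hx, Real.rpow_def_of_pos hx.1, Real.rpow_def_of_pos (by linarith [hx.2]),
    ← Real.exp_add, logBetaKernel]
  ring_nf

theorem wpq_le_wpq_of_logBetaKernel_le {p q x y : ℝ} (hx : x ∈ Ioo 0 1) (hy : y ∈ Ioo 0 1)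
    (h : logBetaKernel p q x ≤ logBetaKernel p q y) : wpq p q x ≤ wpq p q y := by
  have := integral_exp_neg_rpow_mul_rpow_pos p q
  rw [wpq_eq_of_mem_Ioo hx, wpq_eq_of_mem_Ioo hy]
  gcongr

theorem hasDerivAt_logBetaKernel (p q : ℝ) {x : ℝ} (hx : x ∈ Ioo 0 1) :
    HasDerivAt (logBetaKernel p q) (p / x - q / (1 - x)) x := by
  have h₁ := (Real.hasDerivAt_log hx.1.ne').const_mul p
  have h₂ := (((hasDerivAt_id x).const_sub 1).log (sub_pos.2 hx.2).ne').const_mul q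
  refine (h₁.add h₂).congr_deriv ?_
  simp only [id]
  ring

theorem monotoneOn_logBetaKernel {p q : ℝ} (hpq : 0 < p + q) :
    MonotoneOn (logBetaKernel p q) (Icc 0 (p / (p + q)) ∩ Ioo 0 1) := by
  have hderiv x (hx : x ∈ Ioo 0 1) := hasDerivAt_logBetaKernel p q hx
  refine monotoneOn_of_deriv_nonneg ((convex_Icc _ _).inter (convex_Ioo _ _))
    (fun x hx ↦ (hderiv x hx.2).continuousAt.continuousWithinAt)
    (fun x hx ↦ (hderiv x (interior_subset hx).2).differentiableAt.differentiableWithinAt)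
    fun x hx ↦ ?_
  rw [interior_inter, interior_Icc, interior_Ioo] at hx
  have hxpq := (lt_div_iff₀ hpq).1 hx.1.2
  rw [(hderiv x hx.2).deriv, sub_nonneg, div_le_div_iff₀ (sub_pos.2 hx.2.2) hx.2.1]
  linarith

theorem antitoneOn_logBetaKernel {p q : ℝ} (hpq : 0 < p + q) :
    AntitoneOn (logBetaKernel p q) (Icc (p / (p + q)) 1 ∩ Ioo 0 1) := by
  have hderiv x (hx : x ∈ Ioo 0 1) := hasDerivAt_logBetaKernel p q hx
  refine antitoneOn_of_deriv_nonpos ((convex_Icc _ _).inter (convex_Ioo _ _))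
    (fun x hx ↦ (hderiv x hx.2).continuousAt.continuousWithinAt)
    (fun x hx ↦ (hderiv x (interior_subset hx).2).differentiableAt.differentiableWithinAt)
    fun x hx ↦ ?_
  rw [interior_inter, interior_Icc, interior_Ioo] at hx
  have hxpq := (div_lt_iff₀ hpq).1 hx.1.1
  rw [(hderiv x hx.2).deriv, sub_nonpos, div_le_div_iff₀ hx.2.1 (sub_pos.2 hx.2.2)]
  linarith

theorem monotoneOn_wpq {p q : ℝ} (hp : 0 < p) (hq : 0 < q) :
    MonotoneOn (wpq p q) (Icc 0 (p / (p + q))) := by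
  have hlt : p / (p + q) < 1 := (div_lt_one (by positivity)).2 (by linarith)
  intro x hx y hy hxy
  rcases hx.1.eq_or_lt with rfl | hx0
  · simpa [wpq] using wpq_nonneg p q y
  have hx' : x ∈ Ioo 0 1 := ⟨hx0, hx.2.trans_lt hlt⟩
  have hy' : y ∈ Ioo 0 1 := ⟨hx0.trans_le hxy, hy.2.trans_lt hlt⟩
  exact wpq_le_wpq_of_logBetaKernel_le hx' hy'
    (monotoneOn_logBetaKernel (by positivity) ⟨hx, hx'⟩ ⟨hy, hy'⟩ hxy)

theorem antitoneOn_wpq {p q : ℝ} (hp : 0 < p) (hq : 0 < q) :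
    AntitoneOn (wpq p q) (Icc (p / (p + q)) 1) := by
  have hpos : 0 < p / (p + q) := by positivity
  intro x hx y hy hxy
  rcases hy.2.eq_or_lt with rfl | hy1
  · simpa [wpq] using wpq_nonneg p q x
  have hx' : x ∈ Ioo 0 1 := ⟨hpos.trans_le hx.1, hxy.trans_lt hy1⟩
  have hy' : y ∈ Ioo 0 1 := ⟨hpos.trans_le hy.1, hy1⟩
  exact wpq_le_wpq_of_logBetaKernel_le hy' hx'
    (antitoneOn_logBetaKernel (by positivity) ⟨hx, hx'⟩ ⟨hy, hy'⟩ hxy)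

theorem boundedVariationOn_wpq {p q : ℝ} (hp : 0 < p) (hq : 0 < q) :
    BoundedVariationOn (wpq p q) (Icc 0 1) :=
  boundedVariationOn_Icc_of_monotoneOn_of_antitoneOn (by positivity)
    ((div_le_one (by positivity)).2 (by linarith)) (monotoneOn_wpq hp hq) (antitoneOn_wpq hp hq)

theorem wpq_one (p q : ℝ) : wpq p q 1 = 0 := by
  simp [wpq]

theorem exists_pos_le_wpq {p q : ℝ} (hp : 0 ≤ p) (hq : 0 ≤ q) :
    ∃ δ > 0, ∀ x ∈ Icc (1 / 4 : ℝ) (3 / 4), δ ≤ wpq p q x := by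
  set c := ∫ s in (0 : ℝ)..1, Real.exp (-(s ^ (-p) * (1 - s) ^ (-q)))
  have hc : 0 < c := integral_exp_neg_rpow_mul_rpow_pos p q
  refine ⟨c⁻¹ * Real.exp (-Real.exp (-(p * Real.log (1 / 4) + q * Real.log (1 / 4)))),
    by positivity, fun x hx ↦ ?_⟩
  have hx' : x ∈ Ioo 0 1 := ⟨by linarith [hx.1], by linarith [hx.2]⟩
  have h₁ : Real.log (1 / 4) ≤ Real.log x := Real.log_le_log (by norm_num) hx.1
  have h₂ : Real.log (1 / 4) ≤ Real.log (1 - x) :=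
    Real.log_le_log (by norm_num) (by linarith [hx.2])
  rw [wpq_eq_of_mem_Ioo hx', logBetaKernel]
  gcongr

theorem exists_pos_mul_le_Apq {p q : ℝ} (hp : 0 ≤ p) (hq : 0 ≤ q) :
    ∃ α > 0, ∀ᶠ N : ℕ in atTop, α * N ≤ Apq p q N := by
  obtain ⟨δ, hδ, hδw⟩ := exists_pos_le_wpq hp hq
  exact ⟨δ / 4, by positivity, eventually_atTop.2
    ⟨2, fun N hN ↦ mul_le_sum_range_div (wpq_nonneg p q) hδ.le hδw hN⟩⟩

/-- Weighted Khinchin law of large numbers: for i.i.d. integrable random variables, the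
weighted averages concentrate around the weighted averages of the means. -/
theorem weighted_khinchin_law_of_large_numbers
    {Ω : Type*} [MeasurableSpace Ω] (μ : Measure Ω) [IsProbabilityMeasure μ]
    (p q : ℝ) (hp : 0 < p) (hq : 0 < q)
    (X : ℕ → Ω → ℝ) (hmeas : ∀ n, Measurable (X n))
    (hindep : iIndepFun X μ)
    (hident : ∀ n, IdentDistrib (X n) (X 1) μ μ)
    (hint : Integrable (X 1) μ) :
    ∀ ε : ℝ, 0 < ε →
      Tendsto (fun N : ℕ => μ {ω |
          |(Apq p q N)⁻¹ * ∑ n ∈ Finset.Icc 1 N, wpq p q ((n : ℝ) / N) * X n ω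
            - (Apq p q N)⁻¹ * ∑ n ∈ Finset.Icc 1 N, wpq p q ((n : ℝ) / N) * (∫ ω', X n ω' ∂μ)|
          < ε})
        atTop (nhds 1) := by
  intro ε hε
  obtain ⟨α, hα, hA⟩ := exists_pos_mul_le_Apq hp.le hq.le
  have hslln : ∀ᵐ ω ∂μ, Tendsto (fun n : ℕ ↦ (∑ i ∈ Finset.range n, X (i + 1) ω) / n) atTop
      (𝓝 (∫ ω, X 1 ω ∂μ)) :=
    strong_law_ae_real (fun i ↦ X (i + 1)) hint (fun i j hij ↦ hindep.indepFun (by omega))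
      fun i ↦ (hident (i + 1)).trans (hident 1).symm
  refine tendsto_measure_abs_lt_of_ae_tendsto_zero (fun N ↦ by fun_prop) ?_ hε
  filter_upwards [hslln] with ω hω
  simp only [fun n ↦ (hident n).integral_eq, ← mul_sub, ← Finset.sum_sub_distrib]
  exact tendsto_inv_mul_sum_Icc_mul_sub (boundedVariationOn_wpq hp hq) (wpq_one p q) hα hA hω
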